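/- arXiv:2508.12476 — 2 statements merged into one kernel-verified Lean document; each statement's English description precedes it below -/
import Mathlib

section
/- Let A be a 2m-th order n-dimensional Hermitian tensor. If λ ∈ ℂ is an Ĥ-eigenvalue of A, i.e. there exists a nonzero x ∈ ℂⁿ such that Σ_{i₂,...,i_m,j₁,...,j_m} a_{i i₂...i_m j̄₁...j̄_m} x_{i₂}···x_{i_m} conj(x_{j₁})···conj(x_{j_m}) = λ conj(x_i) |x_i|^{2m-2} for all i, then λ is real. -/
open Complex Finset

/-- The conjugate polynomial associated to a `2m`-th order `n`-dimensional complex tensor. -/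
noncomputable def fpoly {n m : ℕ} (A : (Fin m → Fin n) → (Fin m → Fin n) → ℂ)
    (x : Fin n → ℂ) : ℂ :=
  ∑ i : Fin m → Fin n, ∑ j : Fin m → Fin n,
    A i j * (∏ k, x (i k)) * ∏ k, (starRingEnd ℂ) (x (j k))

/-- Hermitian condition for a `2m`-th order tensor. -/
def IsHermitianTensor {n m : ℕ} (A : (Fin m → Fin n) → (Fin m → Fin n) → ℂ) : Prop :=
  ∀ i j, (starRingEnd ℂ) (A i j) = A j i

/-- Conjugate partial-symmetric tensor. -/
def IsCPS {n m : ℕ} (A : (Fin m → Fin n) → (Fin m → Fin n) → ℂ) : Prop :=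
  IsHermitianTensor A ∧
    ∀ (i j : Fin m → Fin n) (σ τ : Equiv.Perm (Fin m)), A (i ∘ σ) (j ∘ τ) = A i j

/-- `λ` is an `Ĥ`-eigenvalue of the `2(m+1)`-th order tensor `A` with eigenvector `x`. -/
noncomputable def IsHhatEigenpair {n m : ℕ}
    (A : (Fin (m+1) → Fin n) → (Fin (m+1) → Fin n) → ℂ)
    (lam : ℂ) (x : Fin n → ℂ) : Prop :=
  x ≠ 0 ∧ ∀ p : Fin n,
    (∑ i : Fin m → Fin n, ∑ j : Fin (m+1) → Fin n,
      A (Fin.cons p i) j * (∏ k, x (i k)) * ∏ k, (starRingEnd ℂ) (x (j k)))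
    = lam * (starRingEnd ℂ) (x p) * ((‖x p‖ : ℂ)) ^ (2*m)

/-- Diagonal entry `a_{p...p p̄...p̄}`. -/
noncomputable def diagEntry {n m : ℕ}
    (A : (Fin m → Fin n) → (Fin m → Fin n) → ℂ) (p : Fin n) : ℂ :=
  A (fun _ => p) (fun _ => p)

/-- `r_p(A)`: sum of moduli of the off-diagonal entries of the `p`-th slice. -/
noncomputable def rOff {n m : ℕ}
    (A : (Fin (m+1) → Fin n) → (Fin (m+1) → Fin n) → ℂ) (p : Fin n) : ℝ :=
  ∑ i : Fin m → Fin n, ∑ j : Fin (m+1) → Fin n,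
    if i = (fun _ => p) ∧ j = (fun _ => p) then 0
    else ‖A (Fin.cons p i) j‖

/-- `r'_p(A)`: sum over tuples in which no index equals `p`. -/
noncomputable def rPrime {n m : ℕ}
    (A : (Fin (m+1) → Fin n) → (Fin (m+1) → Fin n) → ℂ) (p : Fin n) : ℝ :=
  ∑ i : Fin m → Fin n, ∑ j : Fin (m+1) → Fin n,
    if (∀ k, i k ≠ p) ∧ (∀ k, j k ≠ p) then ‖A (Fin.cons p i) j‖ else 0

/-- `r̂_p(A) = r_p(A) - r'_p(A)`. -/
noncomputable def rHat {n m : ℕ}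
    (A : (Fin (m+1) → Fin n) → (Fin (m+1) → Fin n) → ℂ) (p : Fin n) : ℝ :=
  rOff A p - rPrime A p

/-- Entry `a_{p q...q q̄...q̄}`. -/
noncomputable def aSlice {n m : ℕ}
    (A : (Fin (m+1) → Fin n) → (Fin (m+1) → Fin n) → ℂ) (p q : Fin n) : ℂ :=
  A (Fin.cons p (fun _ => q)) (fun _ => q)

/-- `r_p^q(A) = r_p(A) - |a_{p q...q q̄...q̄}|`. -/
noncomputable def rOffSub {n m : ℕ}
    (A : (Fin (m+1) → Fin n) → (Fin (m+1) → Fin n) → ℂ) (p q : Fin n) : ℝ :=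
  rOff A p - ‖aSlice A p q‖

/-- Hermitian positive definiteness. -/
def HermitianPD {n m : ℕ} (A : (Fin m → Fin n) → (Fin m → Fin n) → ℂ) : Prop :=
  ∀ x : Fin n → ℂ, x ≠ 0 → ∃ r : ℝ, fpoly A x = r ∧ 0 < r

/-- Hermitian positive semidefiniteness. -/
def HermitianPSD {n m : ℕ} (A : (Fin m → Fin n) → (Fin m → Fin n) → ℂ) : Prop :=
  ∀ x : Fin n → ℂ, ∃ r : ℝ, fpoly A x = r ∧ 0 ≤ r

/-! Multiplying the `p`-th eigen-equation by `x_p` and summing over `p` gives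
`fpoly A x = λ · ∑ₚ |x_p|^(2m+2)`. For Hermitian `A` the form `fpoly A x` is real, and the sum
is a positive real since `x ≠ 0`, so `λ` is real. -/

section

variable {n m : ℕ}

theorem conj_fpoly_of_isHermitianTensor {A : (Fin m → Fin n) → (Fin m → Fin n) → ℂ}
    (hA : IsHermitianTensor A) (x : Fin n → ℂ) :
    (starRingEnd ℂ) (fpoly A x) = fpoly A x := by
  simp only [fpoly, map_sum, map_mul, map_prod, Complex.conj_conj]
  rw [Finset.sum_comm]
  exact Finset.sum_congr rfl fun i _ => Finset.sum_congr rfl fun j _ => by rw [hA]; ring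

theorem im_fpoly_of_isHermitianTensor {A : (Fin m → Fin n) → (Fin m → Fin n) → ℂ}
    (hA : IsHermitianTensor A) (x : Fin n → ℂ) : (fpoly A x).im = 0 :=
  Complex.conj_eq_iff_im.mp (conj_fpoly_of_isHermitianTensor hA x)

theorem fpoly_eq_sum_mul (A : (Fin (m+1) → Fin n) → (Fin (m+1) → Fin n) → ℂ)
    (x : Fin n → ℂ) :
    fpoly A x = ∑ p, (∑ i : Fin m → Fin n, ∑ j : Fin (m+1) → Fin n,
      A (Fin.cons p i) j * (∏ k, x (i k)) * ∏ k, (starRingEnd ℂ) (x (j k))) * x p := by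
  rw [fpoly, ← (Fin.consEquiv fun _ : Fin (m+1) => Fin n).sum_comp, Fintype.sum_prod_type]
  refine Finset.sum_congr rfl fun p _ => ?_
  simp only [Finset.sum_mul]
  refine Finset.sum_congr rfl fun i _ => Finset.sum_congr rfl fun j _ => ?_
  rw [show Fin.consEquiv (fun _ => Fin n) (p, i) = Fin.cons p i from rfl, Fin.prod_univ_succ]
  simp only [Fin.cons_zero, Fin.cons_succ]
  ring

theorem IsHhatEigenpair.fpoly_eq {A : (Fin (m+1) → Fin n) → (Fin (m+1) → Fin n) → ℂ}
    {lam : ℂ} {x : Fin n → ℂ} (h : IsHhatEigenpair A lam x) :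
    fpoly A x = lam * ((∑ p, ‖x p‖ ^ (2*m+2) : ℝ) : ℂ) := by
  rw [fpoly_eq_sum_mul, Complex.ofReal_sum, Finset.mul_sum]
  refine Finset.sum_congr rfl fun p _ => ?_
  rw [h.2 p]
  push_cast
  linear_combination lam * (‖x p‖ : ℂ) ^ (2*m) * Complex.conj_mul' (x p)

end

theorem sum_norm_pow_pos_of_ne_zero {ι E : Type*} [Fintype ι] [NormedAddCommGroup E]
    {x : ι → E} (hx : x ≠ 0) (k : ℕ) : 0 < ∑ i, ‖x i‖ ^ k := by
  obtain ⟨i, hi⟩ := Function.ne_iff.mp hx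
  exact Finset.sum_pos' (fun _ _ => by positivity)
    ⟨i, Finset.mem_univ i, pow_pos (norm_pos_iff.mpr hi) k⟩

theorem hhat_eigenvalue_of_hermitian_is_real {n m : ℕ}
    (A : (Fin (m+1) → Fin n) → (Fin (m+1) → Fin n) → ℂ)
    (hA : IsHermitianTensor A) (lam : ℂ) (x : Fin n → ℂ)
    (h : IsHhatEigenpair A lam x) :
    lam.im = 0 := by
  have hreal := im_fpoly_of_isHermitianTensor hA x
  rw [h.fpoly_eq, Complex.im_mul_ofReal] at hreal
  exact (mul_eq_zero.mp hreal).resolve_right (sum_norm_pow_pos_of_ne_zero h.1 _).ne'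
end

section
/- For any 2m-th order n-dimensional complex tensor A (n ≥ 2), the Li-Li-Kong type set K_llk(A) is contained in the Geršgorin type set K_ger(A): if z ∈ ℂ satisfies (|z − a_{i...iī...ī}| − r_i^j(A))|z − a_{j...jj̄...j̄}| ≤ |a_{ij...jj̄...j̄}| r_j(A) for some i ≠ j, then |z − a_{i...iī...ī}| ≤ r_i(A) or |z − a_{j...jj̄...j̄}| ≤ r_j(A). -/
open Complex Finset

theorem le_or_le_of_sub_sub_mul_le {x y r s a : ℝ} (hs : 0 ≤ s) (ha : 0 ≤ a)
    (h : (x - (r - a)) * y ≤ a * s) : x ≤ r ∨ y ≤ s := by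
  by_contra! ⟨hx, hy⟩
  have hpos : 0 < (x - r) * y := mul_pos (sub_pos.2 hx) (hs.trans_lt hy)
  have hle : a * s ≤ a * y := mul_le_mul_of_nonneg_left hy.le ha
  linarith

theorem rOff_nonneg {n m : ℕ} (A : (Fin (m+1) → Fin n) → (Fin (m+1) → Fin n) → ℂ)
    (p : Fin n) : 0 ≤ rOff A p := by
  unfold rOff
  positivity

theorem llk_subset_gershgorin_general {n m : ℕ}
    (A : (Fin (m+1) → Fin n) → (Fin (m+1) → Fin n) → ℂ)
    (p q : Fin n) (z : ℂ)
    (h : (‖z - diagEntry A p‖ - rOffSub A p q) * ‖z - diagEntry A q‖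
        ≤ ‖aSlice A p q‖ * rOff A q) :
    ‖z - diagEntry A p‖ ≤ rOff A p ∨
      ‖z - diagEntry A q‖ ≤ rOff A q :=
  le_or_le_of_sub_sub_mul_le (rOff_nonneg A q) (norm_nonneg _) h

theorem llk_subset_gershgorin {n m : ℕ} (hn : 1 < n)
    (A : (Fin (m+1) → Fin n) → (Fin (m+1) → Fin n) → ℂ)
    (p q : Fin n) (hpq : p ≠ q) (z : ℂ)
    (h : (‖z - diagEntry A p‖ - rOffSub A p q) * ‖z - diagEntry A q‖
        ≤ ‖aSlice A p q‖ * rOff A q) :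
    ‖z - diagEntry A p‖ ≤ rOff A p ∨
      ‖z - diagEntry A q‖ ≤ rOff A q :=
  llk_subset_gershgorin_general A p q z h
end
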